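/- arXiv:2306.03202 — 7 statements merged into one kernel-verified Lean document; each statement's English description precedes it below -/
import Mathlib

section
/- Let Ξ be a measurable space, 𝒫 a convex set of probability measures on Ξ, R : 𝒫 → ℝ concave, and dR : 𝒫 × 𝒫 → ℝ a function such that for all P, Q ∈ 𝒫, (R((1−γ)·P + γ·Q) − R(P))/γ → dR(P;Q) as γ ↓ 0. Assume R is C-smooth for some C ≥ 0, i.e. dR(P_γ;P) + dR(P;P_γ) ≤ γ²·C for all P, Q ∈ 𝒫 and γ ∈ [0,1] with P_γ := (1−γ)·P + γ·Q. Fix P ∈ 𝒫, γ ∈ (0,1], δ ≥ 0, and Q' ∈ 𝒫 satisfying the approximate-oracle condition: dR(P;Q) ≤ γ·δ·C + dR(P;Q') for all Q ∈ 𝒫. Set P_γ := (1−γ)·P + γ·Q'. Then for every Q ∈ 𝒫: R(Q) − R(P) ≤ dR(P;Q) ≤ (R(P_γ) − R(P))/γ + γ·C·(1+δ). -/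
open MeasureTheory Filter Set

/-- The mixture `(1-γ)·P + γ·Q` of two measures. -/
noncomputable def mix {Ξ : Type*} [MeasurableSpace Ξ] (P Q : Measure Ξ) (γ : ℝ) : Measure Ξ :=
  ENNReal.ofReal (1 - γ) • P + ENNReal.ofReal γ • Q

/-- Lemma 4.1 (FW-one-step-bounds): for a concave `C`-smooth risk measure `R` with
G-derivatives `dR`, a `δ`-accurate FW-oracle output `Q'` at `P` with step size `γ`, and
`P_γ = (1−γ)·P + γ·Q'`, one has for every `Q ∈ Pset`:
`R(Q) − R(P) ≤ dR(P;Q) ≤ (R(P_γ) − R(P))/γ + γ·C·(1+δ)`. -/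
theorem FW_one_step_bounds {Ξ : Type*} [MeasurableSpace Ξ]
    (Pset : Set (Measure Ξ)) (hprob : ∀ P ∈ Pset, IsProbabilityMeasure P)
    (hconv : ∀ P ∈ Pset, ∀ Q ∈ Pset, ∀ γ ∈ Set.Icc (0 : ℝ) 1, mix P Q γ ∈ Pset)
    (R : Measure Ξ → ℝ) (dR : Measure Ξ → Measure Ξ → ℝ)
    (hconc : ∀ P ∈ Pset, ∀ Q ∈ Pset, ∀ γ ∈ Set.Icc (0 : ℝ) 1,
      (1 - γ) * R P + γ * R Q ≤ R (mix P Q γ))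
    (hdR : ∀ P ∈ Pset, ∀ Q ∈ Pset,
      Tendsto (fun γ : ℝ => (R (mix P Q γ) - R P) / γ)
        (nhdsWithin (0 : ℝ) (Set.Ioi 0)) (nhds (dR P Q)))
    (C : ℝ) (hC : 0 ≤ C)
    (hsmooth : ∀ P ∈ Pset, ∀ Q ∈ Pset, ∀ γ ∈ Set.Icc (0 : ℝ) 1,
      dR (mix P Q γ) P + dR P (mix P Q γ) ≤ γ ^ 2 * C)
    (P : Measure Ξ) (hP : P ∈ Pset) (γ : ℝ) (hγ : γ ∈ Set.Ioc (0 : ℝ) 1)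
    (δ : ℝ) (hδ : 0 ≤ δ)
    (Q' : Measure Ξ) (hQ' : Q' ∈ Pset)
    (horacle : ∀ Q ∈ Pset, dR P Q ≤ γ * δ * C + dR P Q') :
    ∀ Q ∈ Pset, R Q - R P ≤ dR P Q ∧
      dR P Q ≤ (R (mix P Q' γ) - R P) / γ + γ * C * (1 + δ) := by
  have hγ0 : (0:ℝ) < γ := hγ.1
  have hγmem : γ ∈ Set.Icc (0:ℝ) 1 := ⟨hγ0.le, hγ.2⟩
  -- general concavity bound: R B - R A ≤ dR A B
  have key : ∀ A ∈ Pset, ∀ B ∈ Pset, R B - R A ≤ dR A B := by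
    intro A hA B hB
    refine ge_of_tendsto (hdR A hA B hB) ?_
    filter_upwards [Ioo_mem_nhdsGT_of_mem (by norm_num : (0:ℝ) ∈ Set.Ico (0:ℝ) 1)]
      with t ht
    have h := hconc A hA B hB t ⟨ht.1.le, ht.2.le⟩
    rw [le_div_iff₀ ht.1]
    nlinarith
  have hPγ : mix P Q' γ ∈ Pset := hconv P hP Q' hQ' γ hγmem
  -- mixture composition identity
  have hmixmix : ∀ t ∈ Set.Ioo (0:ℝ) 1, mix P (mix P Q' γ) t = mix P Q' (t*γ) := by
    intro t ht
    have h1t : (0:ℝ) ≤ 1 - t := by linarith [ht.2]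
    have h1γ : (0:ℝ) ≤ 1 - γ := by linarith [hγ.2]
    simp only [mix, smul_add, smul_smul, ← add_assoc, ← add_smul]
    congr 1
    · congr 1
      rw [← ENNReal.ofReal_mul ht.1.le,
        ← ENNReal.ofReal_add h1t (mul_nonneg ht.1.le h1γ)]
      congr 1; ring
    · congr 1
      rw [← ENNReal.ofReal_mul ht.1.le]
  -- dR P (mix P Q' γ) = γ * dR P Q'
  have hmap : Tendsto (fun t : ℝ => t * γ) (nhdsWithin 0 (Set.Ioi 0))
      (nhdsWithin 0 (Set.Ioi 0)) := by
    apply tendsto_nhdsWithin_of_tendsto_nhds_of_eventually_within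
    · exact (((continuous_mul_right γ).tendsto' 0 0 (by ring)).mono_left
        nhdsWithin_le_nhds)
    · filter_upwards [self_mem_nhdsWithin] with t ht
      exact mul_pos ht hγ0
  have hcomp : Tendsto (fun t : ℝ => (R (mix P (mix P Q' γ) t) - R P) / t)
      (nhdsWithin (0:ℝ) (Set.Ioi 0)) (nhds (γ * dR P Q')) := by
    have h1 : Tendsto (fun t : ℝ => γ * ((R (mix P Q' (t * γ)) - R P) / (t * γ)))
        (nhdsWithin (0:ℝ) (Set.Ioi 0)) (nhds (γ * dR P Q')) :=
      (((hdR P hP Q' hQ').comp hmap).const_mul γ)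
    refine h1.congr' ?_
    filter_upwards [Ioo_mem_nhdsGT_of_mem (by norm_num : (0:ℝ) ∈ Set.Ico (0:ℝ) 1)]
      with t ht
    rw [hmixmix t ht]
    have hγne : γ ≠ 0 := hγ0.ne'
    have htne : t ≠ 0 := ht.1.ne'
    field_simp
  have heq : dR P (mix P Q' γ) = γ * dR P Q' :=
    tendsto_nhds_unique (hdR P hP _ hPγ) hcomp
  -- smoothness + concavity
  have hs := hsmooth P hP Q' hQ' γ hγmem
  have h1 := key (mix P Q' γ) hPγ P hP
  have hQ'bound : dR P Q' ≤ (R (mix P Q' γ) - R P) / γ + γ * C := by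
    have h2 : dR P Q' ≤ ((R (mix P Q' γ) - R P) + γ ^ 2 * C) / γ := by
      rw [le_div_iff₀ hγ0]
      nlinarith [heq]
    have h3 : ((R (mix P Q' γ) - R P) + γ ^ 2 * C) / γ
        = (R (mix P Q' γ) - R P) / γ + γ * C := by
      field_simp
    linarith
  intro Q hQ
  refine ⟨key P hP Q hQ, ?_⟩
  have := horacle Q hQ
  nlinarith
end

section
/- Let Ξ be a measurable space, 𝒫 a convex set of probability measures on Ξ, R : 𝒫 → ℝ concave, and dR : 𝒫 × 𝒫 → ℝ a function such that for all P, Q ∈ 𝒫, (R((1−γ)·P + γ·Q) − R(P))/γ → dR(P;Q) as γ ↓ 0. Assume R is C-smooth for some C ≥ 0, and let δ ≥ 0. Let P_0 ∈ 𝒫, and for k = 0, 1, 2, … let γ_k := 2/(k+2), let Q_k ∈ 𝒫 satisfy the oracle condition dR(P_k;Q) ≤ δ·γ_k·C + dR(P_k;Q_k) for all Q ∈ 𝒫, and set P_{k+1} := (1−γ_k)·P_k + γ_k·Q_k. Then for every k ≥ 1 and every Q ∈ 𝒫: R(Q) − R(P_k) ≤ 4·C·(1+δ)/(k+2). -/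
open MeasureTheory Filter Set

lemma mix_self {Ξ : Type*} [MeasurableSpace Ξ] (P : Measure Ξ) {γ : ℝ}
    (h0 : 0 ≤ γ) (h1 : γ ≤ 1) : mix P P γ = P := by
  unfold mix
  rw [← add_smul, ← ENNReal.ofReal_add (by linarith) h0]
  norm_num

lemma mix_mix {Ξ : Type*} [MeasurableSpace Ξ] (P Q : Measure Ξ) {t γ : ℝ}
    (ht0 : 0 ≤ t) (ht1 : t ≤ 1) (hγ0 : 0 ≤ γ) (hγ1 : γ ≤ 1) :
    mix P (mix P Q γ) t = mix P Q (t * γ) := by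
  unfold mix
  rw [smul_add, smul_smul, smul_smul, ← add_assoc, ← add_smul,
    ← ENNReal.ofReal_mul ht0, ← ENNReal.ofReal_mul ht0,
    ← ENNReal.ofReal_add (by linarith) (by nlinarith)]
  ring_nf

/-- Proposition 4.2 (Apriori bounds for the Frank-Wolfe algorithm): with step sizes
`γ_k = 2/(k+2)` and a `δ`-accurate FW-oracle, the iterates satisfy
`R(Q) − R(P_k) ≤ 4·C·(1+δ)/(k+2)` for all `k ≥ 1` and `Q ∈ Pset`. -/
theorem FW_apriori_bounds {Ξ : Type*} [MeasurableSpace Ξ]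
    (Pset : Set (Measure Ξ)) (hprob : ∀ P ∈ Pset, IsProbabilityMeasure P)
    (hconv : ∀ P ∈ Pset, ∀ Q ∈ Pset, ∀ γ ∈ Set.Icc (0 : ℝ) 1, mix P Q γ ∈ Pset)
    (R : Measure Ξ → ℝ) (dR : Measure Ξ → Measure Ξ → ℝ)
    (hconc : ∀ P ∈ Pset, ∀ Q ∈ Pset, ∀ γ ∈ Set.Icc (0 : ℝ) 1,
      (1 - γ) * R P + γ * R Q ≤ R (mix P Q γ))
    (hdR : ∀ P ∈ Pset, ∀ Q ∈ Pset,
      Tendsto (fun γ : ℝ => (R (mix P Q γ) - R P) / γ)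
        (nhdsWithin (0 : ℝ) (Set.Ioi 0)) (nhds (dR P Q)))
    (C : ℝ) (hC : 0 ≤ C)
    (hsmooth : ∀ P ∈ Pset, ∀ Q ∈ Pset, ∀ γ ∈ Set.Icc (0 : ℝ) 1,
      dR (mix P Q γ) P + dR P (mix P Q γ) ≤ γ ^ 2 * C)
    (δ : ℝ) (hδ : 0 ≤ δ)
    (P Qs : ℕ → Measure Ξ)
    (hP0 : P 0 ∈ Pset)
    (hQmem : ∀ k : ℕ, Qs k ∈ Pset)
    (horacle : ∀ k : ℕ, ∀ Q ∈ Pset,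
      dR (P k) Q ≤ δ * (2 / ((k : ℝ) + 2)) * C + dR (P k) (Qs k))
    (hupdate : ∀ k : ℕ, P (k + 1) = mix (P k) (Qs k) (2 / ((k : ℝ) + 2))) :
    ∀ k : ℕ, 1 ≤ k → ∀ Q ∈ Pset,
      R Q - R (P k) ≤ 4 * C * (1 + δ) / ((k : ℝ) + 2) := by
  -- step sizes
  have hγmem : ∀ k : ℕ, (2 / ((k : ℝ) + 2)) ∈ Set.Icc (0 : ℝ) 1 := by
    intro k
    have hk : (0 : ℝ) ≤ (k : ℝ) := Nat.cast_nonneg k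
    constructor
    · positivity
    · rw [div_le_one (by linarith)]; linarith
  -- iterates stay in Pset
  have hPmem : ∀ k : ℕ, P k ∈ Pset := by
    intro k
    induction k with
    | zero => exact hP0
    | succ n ih => rw [hupdate n]; exact hconv _ ih _ (hQmem n) _ (hγmem n)
  -- gradient inequality from concavity
  have hgrad : ∀ P' ∈ Pset, ∀ Q' ∈ Pset, R Q' - R P' ≤ dR P' Q' := by
    intro P' hP' Q' hQ'
    refine ge_of_tendsto (hdR P' hP' Q' hQ') ?_
    filter_upwards [Ioo_mem_nhdsGT_of_mem (by constructor <;> norm_num :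
      (0:ℝ) ∈ Ico (0:ℝ) 1)] with γ hγ
    have hγ0 : 0 < γ := hγ.1
    rw [le_div_iff₀ hγ0]
    have := hconc P' hP' Q' hQ' γ ⟨le_of_lt hγ0, le_of_lt hγ.2⟩
    nlinarith [this]
  -- dR P' P' = 0
  have hdself : ∀ P' ∈ Pset, dR P' P' = 0 := by
    intro P' hP'
    refine tendsto_nhds_unique (hdR P' hP' P' hP') ?_
    refine Tendsto.congr' ?_ tendsto_const_nhds
    filter_upwards [Ioo_mem_nhdsGT_of_mem (by constructor <;> norm_num :
      (0:ℝ) ∈ Ico (0:ℝ) 1)] with γ hγ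
    rw [mix_self P' (le_of_lt hγ.1) (le_of_lt hγ.2)]
    simp
  -- scaling of the directional derivative
  have hscale : ∀ P' ∈ Pset, ∀ Q' ∈ Pset, ∀ γ ∈ Set.Icc (0:ℝ) 1,
      dR P' (mix P' Q' γ) = γ * dR P' Q' := by
    intro P' hP' Q' hQ' γ hγ
    rcases eq_or_lt_of_le hγ.1 with h0 | h0
    · have : mix P' Q' γ = P' := by
        rw [← h0]; unfold mix; simp
      rw [this, hdself P' hP', ← h0]; ring
    · have hmem : mix P' Q' γ ∈ Pset := hconv _ hP' _ hQ' _ hγ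
      refine tendsto_nhds_unique (hdR P' hP' _ hmem) ?_
      have h2 : Tendsto (fun t : ℝ => t * γ) (nhdsWithin 0 (Set.Ioi 0))
          (nhdsWithin 0 (Set.Ioi 0)) := by
        apply tendsto_nhdsWithin_of_tendsto_nhds_of_eventually_within
        · have : Tendsto (fun t : ℝ => t * γ) (nhds 0) (nhds (0 * γ)) :=
            (continuous_id.mul continuous_const).tendsto 0
          simpa using this.mono_left nhdsWithin_le_nhds
        · filter_upwards [self_mem_nhdsWithin] with t ht
          exact mul_pos ht h0
      have h3 : Tendsto (fun t : ℝ => γ * ((R (mix P' Q' (t * γ)) - R P') / (t * γ)))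
          (nhdsWithin 0 (Set.Ioi 0)) (nhds (γ * dR P' Q')) :=
        Tendsto.const_mul γ ((hdR P' hP' Q' hQ').comp h2)
      refine Tendsto.congr' ?_ h3
      filter_upwards [Ioo_mem_nhdsGT_of_mem (by constructor <;> norm_num :
        (0:ℝ) ∈ Ico (0:ℝ) 1)] with t ht
      rw [mix_mix P' Q' (le_of_lt ht.1) (le_of_lt ht.2) hγ.1 hγ.2]
      have hγne : γ ≠ 0 := ne_of_gt h0
      have htne : t ≠ 0 := ne_of_gt ht.1
      field_simp
  -- descent lemma
  have hdescent : ∀ P' ∈ Pset, ∀ Q' ∈ Pset, ∀ γ ∈ Set.Icc (0:ℝ) 1,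
      R P' + γ * dR P' Q' - γ ^ 2 * C ≤ R (mix P' Q' γ) := by
    intro P' hP' Q' hQ' γ hγ
    have hmem : mix P' Q' γ ∈ Pset := hconv _ hP' _ hQ' _ hγ
    have h1 := hgrad _ hmem _ hP'
    have h2 := hsmooth P' hP' Q' hQ' γ hγ
    have h3 := hscale P' hP' Q' hQ' γ hγ
    linarith
  -- one-step recursion
  have hstep : ∀ k : ℕ, ∀ Q ∈ Pset,
      R Q - R (P (k + 1)) ≤ (1 - 2 / ((k : ℝ) + 2)) * (R Q - R (P k))
        + (2 / ((k : ℝ) + 2)) ^ 2 * C * (1 + δ) := by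
    intro k Q hQ
    set γ := 2 / ((k : ℝ) + 2) with hγdef
    have hγ := hγmem k
    have hd := hdescent _ (hPmem k) _ (hQmem k) _ hγ
    rw [← hupdate k] at hd
    have ho := horacle k Q hQ
    have hg := hgrad _ (hPmem k) _ hQ
    nlinarith [hγ.1, hγ.2, mul_le_mul_of_nonneg_left (ho.trans' hg) hγ.1]
  -- main induction
  intro k hk Q hQ
  induction k with
  | zero => omega
  | succ n ih =>
    rcases Nat.eq_or_lt_of_le hk with h1 | h1
    · -- k = 1 : n = 0
      have hn : n = 0 := by omega
      subst hn
      have := hstep 0 Q hQ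
      norm_num at this ⊢
      nlinarith [this, mul_nonneg hC hδ]
    · have hn1 : 1 ≤ n := by omega
      have ihh := ih hn1
      have hs := hstep n Q hQ
      have hn : (0:ℝ) ≤ (n:ℝ) := Nat.cast_nonneg n
      have hγ := hγmem n
      have key : (1 - 2 / ((n : ℝ) + 2)) * (R Q - R (P n))
          ≤ (1 - 2 / ((n : ℝ) + 2)) * (4 * C * (1 + δ) / ((n : ℝ) + 2)) :=
        mul_le_mul_of_nonneg_left ihh (by linarith [hγ.2])
      have halg : (1 - 2 / ((n : ℝ) + 2)) * (4 * C * (1 + δ) / ((n : ℝ) + 2))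
          + (2 / ((n : ℝ) + 2)) ^ 2 * C * (1 + δ)
          ≤ 4 * C * (1 + δ) / ((n : ℝ) + 1 + 2) := by
        have h2 : (0:ℝ) < (n:ℝ) + 2 := by linarith
        have h3 : (0:ℝ) < (n:ℝ) + 3 := by linarith
        have hA : (0:ℝ) ≤ C * (1 + δ) := mul_nonneg hC (by linarith)
        have hL : (1 - 2 / ((n : ℝ) + 2)) * (4 * C * (1 + δ) / ((n : ℝ) + 2))
            + (2 / ((n : ℝ) + 2)) ^ 2 * C * (1 + δ)
            = 4 * (C * (1 + δ)) * ((n:ℝ) + 1) / (((n:ℝ) + 2) ^ 2) := by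
          field_simp
          ring
        rw [hL, div_le_div_iff₀ (by positivity) (by linarith)]
        nlinarith [hA]
      push_cast
      linarith
end

section
/- Let X ⊆ ℝ^n be a convex set, Ξ a measurable space, 𝒫 a convex set of probability measures on Ξ, and F : ℝ^n × 𝒫 → ℝ. Assume: (i) for each P ∈ 𝒫 the function F(·,P) is differentiable and α-strongly convex on X for some α > 0, i.e. (α/2)‖x−y‖² ≤ F(y,P) − F(x,P) − ⟨∇₁F(x,P), y−x⟩ for all x,y ∈ X; (ii) for each x ∈ X the function F(x,·) is concave on 𝒫, and there is dF(x;·;·) : 𝒫 × 𝒫 → ℝ with (F(x,(1−γ)·P + γ·Q) − F(x,P))/γ → dF(x;P;Q) as γ ↓ 0 for all P,Q ∈ 𝒫; (iii) dF(x;P;P_γ) + dF(x;P_γ;P) ≤ γ²·C₂ for all x ∈ X, P,Q ∈ 𝒫, γ ∈ [0,1], where P_γ := (1−γ)·P + γ·Q; (iv) dF(x;P;Q) − dF(y;P;Q) ≤ C₁·‖x−y‖ for all x,y ∈ X and P,Q ∈ 𝒫; (v) x : 𝒫 → X assigns to each P a minimizer of F(·,P) over X. Then for all P, Q ∈ 𝒫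 and γ ∈ [0,1], with P_γ := (1−γ)·P + γ·Q: dF(x(P);P;P_γ) + dF(x(P_γ);P_γ;P) ≤ γ²·(C₂ + (C₁/(2α))·(C₁ + √(C₁² + 4·α·C₂))). -/
/-!
Write `x = x(P)`, `y = x(P_γ)` and `δ = ‖x - y‖`. Concavity bounds the increments of `F` in the
measure by `dF`, so strong convexity at the two minimizers gives `α δ² ≤ S`, where `S` is the sum
to be bounded. On the other hand `dF(z; P; P_γ) = γ dF(z; P; Q)`, so moving the first summand of
`S` from `x` to `y` costs at most `γ C₁ δ`, and the smoothness hypothesis gives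
`S ≤ γ² C₂ + γ C₁ δ`. Hence `δ` is at most the positive root of `α δ² = γ C₁ δ + γ² C₂`, which is
`γ (C₁ + √(C₁² + 4 α C₂)) / (2 α)`, and substituting back gives the bound.
-/

open MeasureTheory Filter Set

open Topology

section MixDeriv

variable {Ξ : Type*} [MeasurableSpace Ξ]

lemma mix_zero (P Q : Measure Ξ) : mix P Q 0 = P := by
  simp [mix]

lemma mix_mix_s10 (P Q : Measure Ξ) {s γ : ℝ} (hs : s ∈ Icc (0 : ℝ) 1) (hγ : γ ∈ Icc (0 : ℝ) 1) :
    mix P (mix P Q γ) s = mix P Q (s * γ) := by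
  obtain ⟨hs0, hs1⟩ := hs
  obtain ⟨hγ0, hγ1⟩ := hγ
  rw [mix, mix, mix, smul_add, smul_smul, smul_smul, ← add_assoc, ← add_smul,
    ← ENNReal.ofReal_mul hs0, ← ENNReal.ofReal_mul hs0,
    ← ENNReal.ofReal_add (by linarith) (by nlinarith)]
  ring_nf

/-- `d` is the G-derivative `lim_{γ ↓ 0} (f(P_γ) - f(P)) / γ` of `f` at `P` in direction `Q`. -/
def HasMixDeriv (f : Measure Ξ → ℝ) (P Q : Measure Ξ) (d : ℝ) : Prop :=
  Tendsto (fun γ : ℝ => (f (mix P Q γ) - f P) / γ) (𝓝[>] 0) (𝓝 d)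

variable {f : Measure Ξ → ℝ} {P Q : Measure Ξ} {d : ℝ}

lemma HasMixDeriv.sub_le (hf : HasMixDeriv f P Q d)
    (hconc : ∀ γ ∈ Icc (0 : ℝ) 1, (1 - γ) * f P + γ * f Q ≤ f (mix P Q γ)) :
    f Q - f P ≤ d := by
  refine ge_of_tendsto hf ?_
  filter_upwards [Ioc_mem_nhdsGT zero_lt_one] with γ hγ
  rw [le_div_iff₀ hγ.1]
  linarith [hconc γ (Ioc_subset_Icc_self hγ)]

lemma HasMixDeriv.mix_right (hf : HasMixDeriv f P Q d) {γ : ℝ} (hγ : γ ∈ Ioc (0 : ℝ) 1) :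
    HasMixDeriv f P (mix P Q γ) (γ * d) := by
  have hscale : Tendsto (fun s : ℝ => s * γ) (𝓝[>] 0) (𝓝[>] 0) :=
    tendsto_nhdsWithin_iff.2
      ⟨((continuous_mul_const γ).tendsto' 0 0 (zero_mul γ)).mono_left nhdsWithin_le_nhds,
        eventually_mem_nhdsWithin.mono fun s hs => mul_pos hs hγ.1⟩
  refine ((hf.comp hscale).const_mul γ).congr' ?_
  filter_upwards [Ioc_mem_nhdsGT zero_lt_one] with s hs
  rw [Function.comp_apply, mix_mix_s10 P Q (Ioc_subset_Icc_self hs) (Ioc_subset_Icc_self hγ)]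
  field_simp [hγ.1.ne', hs.1.ne']

end MixDeriv

lemma inner_gradient_sub_nonneg_of_isMinOn {E : Type*} [NormedAddCommGroup E]
    [InnerProductSpace ℝ E] [CompleteSpace E] {X : Set E} (hX : Convex ℝ X) {f : E → ℝ} {x y : E}
    (hf : DifferentiableAt ℝ f x) (hmin : IsMinOn f X x) (hx : x ∈ X) (hy : y ∈ X) :
    0 ≤ inner ℝ (gradient f x) (y - x) := by
  rw [inner_gradient_left]
  exact hmin.localize.hasFDerivWithinAt_nonneg hf.hasFDerivAt.hasFDerivWithinAt
    (sub_mem_posTangentConeAt_of_segment_subset (hX.segment_subset hx hy))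

lemma half_mul_sq_norm_sub_le_of_isMinOn {E : Type*} [NormedAddCommGroup E]
    [InnerProductSpace ℝ E] [CompleteSpace E] {X : Set E} (hX : Convex ℝ X) {f : E → ℝ} {x y : E}
    {α : ℝ} (hf : DifferentiableAt ℝ f x) (hmin : IsMinOn f X x) (hx : x ∈ X) (hy : y ∈ X)
    (hsc : α / 2 * ‖x - y‖ ^ 2 ≤ f y - f x - inner ℝ (gradient f x) (y - x)) :
    α / 2 * ‖x - y‖ ^ 2 ≤ f y - f x :=
  hsc.trans (sub_le_self _ (inner_gradient_sub_nonneg_of_isMinOn hX hf hmin hx hy))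

/-- The larger root of `a t² = k b t + k² c` is `k` times that of `a u² = b u + c`. -/
lemma le_mul_quadratic_root_of_sq_le {a b c k t : ℝ} (ha : 0 < a) (hk : 0 ≤ k)
    (h : a * t ^ 2 ≤ k * b * t + k ^ 2 * c) :
    t ≤ k * (b + √(b ^ 2 + 4 * a * c)) / (2 * a) := by
  have hsq : (2 * a * t - k * b) ^ 2 ≤ k ^ 2 * (b ^ 2 + 4 * a * c) := by nlinarith
  have hroot := Real.le_sqrt_of_sq_le hsq
  rw [Real.sqrt_mul (sq_nonneg k), Real.sqrt_sq hk] at hroot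
  rw [le_div_iff₀ (by positivity)]
  linarith

theorem NDRO_smoothness_general {n : ℕ} {Ξ : Type*} [MeasurableSpace Ξ]
    (X : Set (EuclideanSpace ℝ (Fin n))) (hXconv : Convex ℝ X)
    (Pset : Set (Measure Ξ))
    (hconvP : ∀ P ∈ Pset, ∀ Q ∈ Pset, ∀ γ ∈ Set.Icc (0 : ℝ) 1, mix P Q γ ∈ Pset)
    (F : EuclideanSpace ℝ (Fin n) → Measure Ξ → ℝ)
    (α : ℝ) (hα : 0 < α) (C₁ C₂ : ℝ) (hC₁ : 0 ≤ C₁)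
    (hFdiff : ∀ P ∈ Pset, Differentiable ℝ (fun x => F x P))
    (hsc : ∀ P ∈ Pset, ∀ x ∈ X, ∀ y ∈ X,
      α / 2 * ‖x - y‖ ^ 2 ≤
        F y P - F x P - (inner ℝ (gradient (fun z => F z P) x) (y - x) : ℝ))
    (hFconc : ∀ x ∈ X, ∀ P ∈ Pset, ∀ Q ∈ Pset, ∀ γ ∈ Set.Icc (0 : ℝ) 1,
      (1 - γ) * F x P + γ * F x Q ≤ F x (mix P Q γ))
    (dF : EuclideanSpace ℝ (Fin n) → Measure Ξ → Measure Ξ → ℝ)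
    (hdF : ∀ x ∈ X, ∀ P ∈ Pset, ∀ Q ∈ Pset,
      Tendsto (fun γ : ℝ => (F x (mix P Q γ) - F x P) / γ)
        (nhdsWithin (0 : ℝ) (Set.Ioi 0)) (nhds (dF x P Q)))
    (hsm : ∀ x ∈ X, ∀ P ∈ Pset, ∀ Q ∈ Pset, ∀ γ ∈ Set.Icc (0 : ℝ) 1,
      dF x P (mix P Q γ) + dF x (mix P Q γ) P ≤ γ ^ 2 * C₂)
    (hlip : ∀ x ∈ X, ∀ y ∈ X, ∀ P ∈ Pset, ∀ Q ∈ Pset,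
      dF x P Q - dF y P Q ≤ C₁ * ‖x - y‖)
    (xmin : Measure Ξ → EuclideanSpace ℝ (Fin n))
    (hxmem : ∀ P ∈ Pset, xmin P ∈ X)
    (hxmin : ∀ P ∈ Pset, ∀ y ∈ X, F (xmin P) P ≤ F y P) :
    ∀ P ∈ Pset, ∀ Q ∈ Pset, ∀ γ ∈ Set.Icc (0 : ℝ) 1,
      dF (xmin P) P (mix P Q γ) + dF (xmin (mix P Q γ)) (mix P Q γ) P ≤
        γ ^ 2 * (C₂ + C₁ / (2 * α) * (C₁ + Real.sqrt (C₁ ^ 2 + 4 * α * C₂))) := by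
  intro P hP Q hQ γ hγ
  rcases hγ.1.eq_or_lt with rfl | hγ0
  · simpa [mix_zero] using hsm (xmin P) (hxmem P hP) P hP Q hQ 0 hγ
  set R := mix P Q γ
  set x := xmin P
  set y := xmin R
  have hR : R ∈ Pset := hconvP P hP Q hQ γ hγ
  have hx : x ∈ X := hxmem P hP
  have hy : y ∈ X := hxmem R hR
  have hlower : α * ‖x - y‖ ^ 2 ≤ dF x P R + dF y R P := by
    have hgrowthP := half_mul_sq_norm_sub_le_of_isMinOn hXconv (hFdiff P hP x) (hxmin P hP) hx hy
      (hsc P hP x hx y hy)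
    have hgrowthR := half_mul_sq_norm_sub_le_of_isMinOn hXconv (hFdiff R hR y) (hxmin R hR) hy hx
      (hsc R hR y hy x hx)
    have hincrP := HasMixDeriv.sub_le (hdF x hx P hP R hR) (hFconc x hx P hP R hR)
    have hincrR := HasMixDeriv.sub_le (hdF y hy R hR P hP) (hFconc y hy R hR P hP)
    rw [norm_sub_rev] at hgrowthR
    linarith
  have hscale : ∀ z ∈ X, dF z P R = γ * dF z P Q := fun z hz =>
    tendsto_nhds_unique (hdF z hz P hP R hR)
      (HasMixDeriv.mix_right (hdF z hz P hP Q hQ) ⟨hγ0, hγ.2⟩)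
  have hupper : dF x P R + dF y R P ≤ γ * C₁ * ‖x - y‖ + γ ^ 2 * C₂ := by
    have hlipγ := mul_le_mul_of_nonneg_left (hlip x hx y hy P hP Q hQ) hγ0.le
    have hsmy := hsm y hy P hP Q hQ γ hγ
    rw [hscale y hy] at hsmy
    rw [hscale x hx]
    linarith
  have hroot := le_mul_quadratic_root_of_sq_le hα hγ0.le (hlower.trans hupper)
  calc dF x P R + dF y R P ≤ γ * C₁ * ‖x - y‖ + γ ^ 2 * C₂ := hupper
    _ ≤ γ * C₁ * (γ * (C₁ + √(C₁ ^ 2 + 4 * α * C₂)) / (2 * α)) + γ ^ 2 * C₂ := by gcongr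
    _ = γ ^ 2 * (C₂ + C₁ / (2 * α) * (C₁ + √(C₁ ^ 2 + 4 * α * C₂))) := by ring

/-- Lemma 5.2(ii) (NDRO smoothness): under strong convexity in `x`, uniform `C₂`-smoothness
of the G-derivatives `dF` in the measure argument, and `C₁`-Lipschitz continuity of `dF`
in `x`, the risk measure `R(P) = min_{x∈X} F(x,P)` is `C`-smooth with
`C = C₂ + (C₁/(2α))(C₁ + √(C₁² + 4αC₂))`; by Danskin's theorem its G-derivative is
`dR(P;Q) = dF(x(P);P;Q)`. -/
theorem NDRO_smoothness {n : ℕ} {Ξ : Type*} [MeasurableSpace Ξ]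
    (X : Set (EuclideanSpace ℝ (Fin n))) (hXconv : Convex ℝ X)
    (Pset : Set (Measure Ξ)) (hprob : ∀ P ∈ Pset, IsProbabilityMeasure P)
    (hconvP : ∀ P ∈ Pset, ∀ Q ∈ Pset, ∀ γ ∈ Set.Icc (0 : ℝ) 1, mix P Q γ ∈ Pset)
    (F : EuclideanSpace ℝ (Fin n) → Measure Ξ → ℝ)
    (α : ℝ) (hα : 0 < α) (C₁ C₂ : ℝ) (hC₁ : 0 ≤ C₁) (hC₂ : 0 ≤ C₂)
    (hFdiff : ∀ P ∈ Pset, Differentiable ℝ (fun x => F x P))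
    (hsc : ∀ P ∈ Pset, ∀ x ∈ X, ∀ y ∈ X,
      α / 2 * ‖x - y‖ ^ 2 ≤
        F y P - F x P - (inner ℝ (gradient (fun z => F z P) x) (y - x) : ℝ))
    (hFconc : ∀ x ∈ X, ∀ P ∈ Pset, ∀ Q ∈ Pset, ∀ γ ∈ Set.Icc (0 : ℝ) 1,
      (1 - γ) * F x P + γ * F x Q ≤ F x (mix P Q γ))
    (dF : EuclideanSpace ℝ (Fin n) → Measure Ξ → Measure Ξ → ℝ)
    (hdF : ∀ x ∈ X, ∀ P ∈ Pset, ∀ Q ∈ Pset,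
      Tendsto (fun γ : ℝ => (F x (mix P Q γ) - F x P) / γ)
        (nhdsWithin (0 : ℝ) (Set.Ioi 0)) (nhds (dF x P Q)))
    (hsm : ∀ x ∈ X, ∀ P ∈ Pset, ∀ Q ∈ Pset, ∀ γ ∈ Set.Icc (0 : ℝ) 1,
      dF x P (mix P Q γ) + dF x (mix P Q γ) P ≤ γ ^ 2 * C₂)
    (hlip : ∀ x ∈ X, ∀ y ∈ X, ∀ P ∈ Pset, ∀ Q ∈ Pset,
      dF x P Q - dF y P Q ≤ C₁ * ‖x - y‖)
    (xmin : Measure Ξ → EuclideanSpace ℝ (Fin n))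
    (hxmem : ∀ P ∈ Pset, xmin P ∈ X)
    (hxmin : ∀ P ∈ Pset, ∀ y ∈ X, F (xmin P) P ≤ F y P) :
    ∀ P ∈ Pset, ∀ Q ∈ Pset, ∀ γ ∈ Set.Icc (0 : ℝ) 1,
      dF (xmin P) P (mix P Q γ) + dF (xmin (mix P Q γ)) (mix P Q γ) P ≤
        γ ^ 2 * (C₂ + C₁ / (2 * α) * (C₁ + Real.sqrt (C₁ ^ 2 + 4 * α * C₂))) :=
  NDRO_smoothness_general X hXconv Pset hconvP F α hα C₁ C₂ hC₁ hFdiff hsc hFconc dF hdF hsm hlip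
    xmin hxmem hxmin
end

section
/- Let X be a nonempty subset of a normed real vector space with ‖y‖ ≤ B for all y ∈ X, where B > 0, let 𝒫 be a nonempty set, F : X × 𝒫 → ℝ, and ε > 0. Define F_ε(x,P) := F(x,P) + (ε/B²)·‖x‖². Suppose (x',P') ∈ X × 𝒫 satisfies: F_ε(x',Q) ≤ ε + F_ε(x',P') for all Q ∈ 𝒫, and F_ε(x',P') ≤ F_ε(y,P') for all y ∈ X (i.e. x' exactly minimizes F_ε(·,P')). Then (x',P') is an ε-saddle point of F: F(x',Q) ≤ ε + F(x',P') for all Q ∈ 𝒫, and F(x',P') ≤ ε + F(y,P') for all y ∈ X. -/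
/-- Section 5.3 / Corollary 5.5: an `ε`-saddle point of the strongly convex regularization
`F_ε(x,P) = F(x,P) + (ε/B²)‖x‖²`, in which the minimization over `x` is solved exactly,
is an `ε`-saddle point of `F` itself. -/
theorem regularized_eps_saddle_point {E : Type*} [NormedAddCommGroup E] [NormedSpace ℝ E]
    {P : Type*} [Nonempty P]
    (X : Set E) (hXne : X.Nonempty) (B : ℝ) (hB : 0 < B) (hbound : ∀ y ∈ X, ‖y‖ ≤ B)
    (F : E → P → ℝ) (ε : ℝ) (hε : 0 < ε)
    (x' : E) (hx' : x' ∈ X) (P' : P)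
    (h1 : ∀ Q : P, F x' Q + ε / B ^ 2 * ‖x'‖ ^ 2 ≤
      ε + (F x' P' + ε / B ^ 2 * ‖x'‖ ^ 2))
    (h2 : ∀ y ∈ X, F x' P' + ε / B ^ 2 * ‖x'‖ ^ 2 ≤ F y P' + ε / B ^ 2 * ‖y‖ ^ 2) :
    (∀ Q : P, F x' Q ≤ ε + F x' P') ∧ (∀ y ∈ X, F x' P' ≤ ε + F y P') := by
  constructor
  · intro Q; linarith [h1 Q]
  · intro y hy
    have hB2 : (0:ℝ) < B ^ 2 := by positivity
    have hy2 : ‖y‖ ^ 2 ≤ B ^ 2 := by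
      have := hbound y hy
      have h0 : (0:ℝ) ≤ ‖y‖ := norm_nonneg y
      nlinarith
    have hx2 : (0:ℝ) ≤ ‖x'‖ ^ 2 := by positivity
    have key : ε / B ^ 2 * ‖y‖ ^ 2 - ε / B ^ 2 * ‖x'‖ ^ 2 ≤ ε := by
      have h3 : ε / B ^ 2 * ‖y‖ ^ 2 ≤ ε := by
        rw [div_mul_eq_mul_div, div_le_iff₀ hB2]
        nlinarith
      have h4 : 0 ≤ ε / B ^ 2 * ‖x'‖ ^ 2 := by positivity
      linarith
    linarith [h2 y hy]
end

section
/- Let P and Q be probability measures on ℝ^n with finite second moments, set μ_P := ∫ ξ dP, μ_Q := ∫ ξ dQ, Σ_P := ∫ ξξᵀ dP, Σ_Q := ∫ ξξᵀ dQ, and for x ∈ ℝ^n define D_x(P,Q) := xᵀ(Σ_Q − Σ_P)x − 2·(xᵀμ_P)·(xᵀ(μ_Q − μ_P)). Let μ̂ ∈ ℝ^n and B_Σ, B_μ ≥ 0, and assume ‖Σ_Q − Σ_P‖_op ≤ B_Σ (operator norm with respect to the Euclidean norm), ‖μ_Q − μ_P‖₂ ≤ B_μ, ‖μ_P − μ̂‖₂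 ≤ B_μ, and ‖μ_Q − μ̂‖₂ ≤ B_μ. Then for all x, y in the unit simplex Δ_n: D_x(P,Q) − D_y(P,Q) ≤ 2·(B_Σ + 2·(B_μ + ‖μ̂‖₂)² + B_μ²)·‖x − y‖₂. -/
open MeasureTheory Set
open scoped BigOperators

/-- The mean `μ_P = ∫ ξ dP`. -/
noncomputable def meanVec {n : ℕ} (P : Measure (EuclideanSpace ℝ (Fin n))) :
    EuclideanSpace ℝ (Fin n) :=
  ∫ ξ, ξ ∂P

/-- The second-moment matrix `Σ_P = ∫ ξξᵀ dP` (entrywise). -/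
noncomputable def secondMoment {n : ℕ} (P : Measure (EuclideanSpace ℝ (Fin n))) :
    Matrix (Fin n) (Fin n) ℝ :=
  Matrix.of fun i j => ∫ ξ, ξ i * ξ j ∂P

/-- The quadratic form `xᵀ A x`. -/
noncomputable def quadForm {n : ℕ} (A : Matrix (Fin n) (Fin n) ℝ)
    (x : EuclideanSpace ℝ (Fin n)) : ℝ :=
  ∑ i, ∑ j, x i * A i j * x j

/-- The operator norm of a matrix with respect to the Euclidean norm. -/
noncomputable def euclideanOpNorm {n : ℕ} (A : Matrix (Fin n) (Fin n) ℝ) : ℝ :=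
  ‖LinearMap.toContinuousLinearMap (Matrix.toEuclideanLin A)‖

/-- The G-derivative `D_x(P,Q) = xᵀ(Σ_Q − Σ_P)x − 2(xᵀμ_P)(xᵀ(μ_Q − μ_P))` of the
variance `V_x(P) = xᵀ(Σ_P − μ_Pμ_Pᵀ)x` at `P` in direction `Q`. -/
noncomputable def varDeriv {n : ℕ} (x : EuclideanSpace ℝ (Fin n))
    (P Q : Measure (EuclideanSpace ℝ (Fin n))) : ℝ :=
  quadForm (secondMoment Q - secondMoment P) x -
    2 * (inner ℝ x (meanVec P) : ℝ) * (inner ℝ x (meanVec Q - meanVec P) : ℝ)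

/-! Both parts of `D_x` are quadratic in `x`, so their increments factor through `x − y`:
`a(x,x) − a(y,y) = a(x − y, x) + a(y, x − y)` for any bilinear `a`. On the simplex
`‖x‖, ‖y‖ ≤ 1`, and `‖μ_P‖ ≤ B_μ + ‖μ̂‖`, so `D_x − D_y ≤ 2(B_Σ + 2(B_μ + ‖μ̂‖)B_μ)‖x − y‖`. -/

open scoped InnerProductSpace

lemma norm_le_one_of_nonneg_of_sum_eq_one {ι : Type*} [Fintype ι] (x : EuclideanSpace ℝ ι)
    (h0 : ∀ i, 0 ≤ x i) (h1 : ∑ i, x i = 1) : ‖x‖ ≤ 1 := by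
  rw [EuclideanSpace.norm_eq, Real.sqrt_le_one]
  calc ∑ i, ‖x i‖ ^ 2 ≤ ∑ i, x i := Finset.sum_le_sum fun i _ => by
        have hle : x i ≤ 1 := h1 ▸ Finset.single_le_sum (fun j _ => h0 j) (Finset.mem_univ i)
        rw [Real.norm_eq_abs, sq_abs]
        nlinarith [h0 i]
    _ = 1 := h1

lemma quadForm_eq_inner {n : ℕ} (A : Matrix (Fin n) (Fin n) ℝ) (z : EuclideanSpace ℝ (Fin n)) :
    quadForm A z = ⟪z, LinearMap.toContinuousLinearMap (Matrix.toEuclideanLin A) z⟫_ℝ := by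
  rw [quadForm, PiLp.inner_apply, LinearMap.coe_toContinuousLinearMap', Matrix.ofLp_toLpLin]
  refine Finset.sum_congr rfl fun i _ => ?_
  simp only [Matrix.toLin'_apply, Matrix.mulVec, dotProduct, RCLike.inner_apply, conj_trivial,
    Finset.sum_mul]
  exact Finset.sum_congr rfl fun j _ => by ring

section InnerProduct

variable {E : Type*} [NormedAddCommGroup E] [InnerProductSpace ℝ E]

lemma inner_map_self_sub_inner_map_self_le (f : E →L[ℝ] E) (x y : E) :
    ⟪x, f x⟫_ℝ - ⟪y, f y⟫_ℝ ≤ ‖f‖ * (‖x‖ + ‖y‖) * ‖x - y‖ := by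
  have hsplit : ⟪x, f x⟫_ℝ - ⟪y, f y⟫_ℝ = ⟪x - y, f x⟫_ℝ + ⟪y, f (x - y)⟫_ℝ := by
    rw [map_sub, inner_sub_left, inner_sub_right]; ring
  calc ⟪x, f x⟫_ℝ - ⟪y, f y⟫_ℝ
      ≤ ‖x - y‖ * (‖f‖ * ‖x‖) + ‖y‖ * (‖f‖ * ‖x - y‖) := by
        rw [hsplit]
        gcongr
        · exact (real_inner_le_norm _ _).trans (by gcongr; exact f.le_opNorm x)
        · exact (real_inner_le_norm _ _).trans (by gcongr; exact f.le_opNorm _)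
    _ = ‖f‖ * (‖x‖ + ‖y‖) * ‖x - y‖ := by ring

lemma abs_inner_mul_inner_sub_inner_mul_inner_le (a b x y : E) :
    |⟪x, a⟫_ℝ * ⟪x, b⟫_ℝ - ⟪y, a⟫_ℝ * ⟪y, b⟫_ℝ| ≤ ‖a‖ * ‖b‖ * (‖x‖ + ‖y‖) * ‖x - y‖ := by
  have hsplit : ⟪x, a⟫_ℝ * ⟪x, b⟫_ℝ - ⟪y, a⟫_ℝ * ⟪y, b⟫_ℝ
      = ⟪x - y, a⟫_ℝ * ⟪x, b⟫_ℝ + ⟪y, a⟫_ℝ * ⟪x - y, b⟫_ℝ := by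
    rw [inner_sub_left, inner_sub_left]; ring
  calc |⟪x, a⟫_ℝ * ⟪x, b⟫_ℝ - ⟪y, a⟫_ℝ * ⟪y, b⟫_ℝ|
      ≤ ‖x - y‖ * ‖a‖ * (‖x‖ * ‖b‖) + ‖y‖ * ‖a‖ * (‖x - y‖ * ‖b‖) := by
        rw [hsplit]
        refine (abs_add_le _ _).trans ?_
        rw [abs_mul, abs_mul]
        gcongr <;> exact abs_real_inner_le_norm _ _
    _ = ‖a‖ * ‖b‖ * (‖x‖ + ‖y‖) * ‖x - y‖ := by ring

end InnerProduct

lemma varDeriv_eq_inner {n : ℕ} (x : EuclideanSpace ℝ (Fin n))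
    (P Q : Measure (EuclideanSpace ℝ (Fin n))) :
    varDeriv x P Q =
      ⟪x, LinearMap.toContinuousLinearMap
        (Matrix.toEuclideanLin (secondMoment Q - secondMoment P)) x⟫_ℝ -
        2 * (⟪x, meanVec P⟫_ℝ * ⟪x, meanVec Q - meanVec P⟫_ℝ) := by
  rw [varDeriv, quadForm_eq_inner, mul_assoc]

theorem variance_G_derivative_lipschitz_general {n : ℕ}
    (P Q : Measure (EuclideanSpace ℝ (Fin n)))
    (muhat : EuclideanSpace ℝ (Fin n)) (BSig Bμ : ℝ)
    (hSig : euclideanOpNorm (secondMoment Q - secondMoment P) ≤ BSig)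
    (hμ : ‖meanVec Q - meanVec P‖ ≤ Bμ)
    (hμP : ‖meanVec P - muhat‖ ≤ Bμ)
    (x y : EuclideanSpace ℝ (Fin n))
    (hx_nonneg : ∀ i, 0 ≤ x i) (hx_sum : ∑ i, x i = 1)
    (hy_nonneg : ∀ i, 0 ≤ y i) (hy_sum : ∑ i, y i = 1) :
    varDeriv x P Q - varDeriv y P Q ≤
      2 * (BSig + 2 * (Bμ + ‖muhat‖) ^ 2 + Bμ ^ 2) * ‖x - y‖ := by
  rw [varDeriv_eq_inner, varDeriv_eq_inner]
  set f := LinearMap.toContinuousLinearMap (Matrix.toEuclideanLin (secondMoment Q - secondMoment P))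
  have hBμ : 0 ≤ Bμ := (norm_nonneg _).trans hμ
  have hxy : ‖x‖ + ‖y‖ ≤ 2 := by
    linarith [norm_le_one_of_nonneg_of_sum_eq_one x hx_nonneg hx_sum,
      norm_le_one_of_nonneg_of_sum_eq_one y hy_nonneg hy_sum]
  have hmean : ‖meanVec P‖ ≤ Bμ + ‖muhat‖ :=
    (norm_le_norm_add_norm_sub' _ muhat).trans (by linarith)
  have hquad : ⟪x, f x⟫_ℝ - ⟪y, f y⟫_ℝ ≤ BSig * 2 * ‖x - y‖ := by
    have hf : ‖f‖ ≤ BSig := hSig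
    refine (inner_map_self_sub_inner_map_self_le f x y).trans ?_
    gcongr
    exact (norm_nonneg _).trans hf
  have hcross : -((Bμ + ‖muhat‖) * Bμ * 2 * ‖x - y‖) ≤
      ⟪x, meanVec P⟫_ℝ * ⟪x, meanVec Q - meanVec P⟫_ℝ -
        ⟪y, meanVec P⟫_ℝ * ⟪y, meanVec Q - meanVec P⟫_ℝ := by
    refine le_trans ?_ (neg_le_of_abs_le
      (abs_inner_mul_inner_sub_inner_mul_inner_le (meanVec P) (meanVec Q - meanVec P) x y))
    gcongr
  have hconst :
      2 * (Bμ + ‖muhat‖) * Bμ * ‖x - y‖ ≤ (2 * (Bμ + ‖muhat‖) ^ 2 + Bμ ^ 2) * ‖x - y‖ := by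
    gcongr
    nlinarith [norm_nonneg muhat]
  linarith

/-- Lemma 6.2(ii) (continuity of the variance G-derivative): under the moment bounds
`‖Σ_Q−Σ_P‖_op ≤ B_Σ`, `‖μ_Q−μ_P‖₂ ≤ B_μ`, `‖μ_P−μ̂‖₂ ≤ B_μ`, `‖μ_Q−μ̂‖₂ ≤ B_μ`,
the G-derivative of the variance is Lipschitz in `x` on the unit simplex with constant
`C₁ = 2(B_Σ + 2(B_μ + ‖μ̂‖₂)² + B_μ²)`. -/
theorem variance_G_derivative_lipschitz {n : ℕ}
    (P Q : Measure (EuclideanSpace ℝ (Fin n)))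
    [IsProbabilityMeasure P] [IsProbabilityMeasure Q]
    (hP : Integrable (fun ξ => ‖ξ‖ ^ 2) P) (hQ : Integrable (fun ξ => ‖ξ‖ ^ 2) Q)
    (muhat : EuclideanSpace ℝ (Fin n)) (BSig Bμ : ℝ) (hBSig0 : 0 ≤ BSig) (hBμ0 : 0 ≤ Bμ)
    (hSig : euclideanOpNorm (secondMoment Q - secondMoment P) ≤ BSig)
    (hμ : ‖meanVec Q - meanVec P‖ ≤ Bμ)
    (hμP : ‖meanVec P - muhat‖ ≤ Bμ)
    (hμQ : ‖meanVec Q - muhat‖ ≤ Bμ)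
    (x y : EuclideanSpace ℝ (Fin n))
    (hx_nonneg : ∀ i, 0 ≤ x i) (hx_sum : ∑ i, x i = 1)
    (hy_nonneg : ∀ i, 0 ≤ y i) (hy_sum : ∑ i, y i = 1) :
    varDeriv x P Q - varDeriv y P Q ≤
      2 * (BSig + 2 * (Bμ + ‖muhat‖) ^ 2 + Bμ ^ 2) * ‖x - y‖ :=
  variance_G_derivative_lipschitz_general P Q muhat BSig Bμ hSig hμ hμP x y hx_nonneg hx_sum
    hy_nonneg hy_sum
end

section
/- Let E be a finite-dimensional real inner product space, ν a norm on E, x ∈ E, c ∈ ℝ, and let a := sup{⟨x,u⟩ : u ∈ E, ν(u) ≤ 1} be the dual norm of x. Suppose η > a². Then sup_{q∈E} [(⟨x,q⟩ + c)² − η·ν(q)²] = η·c²/(η − a²). Moreover, if q̄ ∈ E satisfies ν(q̄) ≤ 1 and ⟨x,q̄⟩ = a, then the supremum is attained at q* := (a·c/(η − a²))·q̄. -/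
/-!
Rescaling `q` into the `ν`-unit ball gives `|⟪x, q⟫| ≤ a ν(q)`, so with `t = ν(q)` the objective
is at most `(a t + |c|)² - η t²`, a concave quadratic in `t` with maximum `η c² / (η - a²)`.
At `q = k q̄` with `k = a c / (η - a²)` the objective is at least `(a k + c)² - η k²`, which is
that maximum. A maximiser `q̄` of `⟪x, ·⟫` on the `ν`-unit ball exists because, in finite
dimension, the norm `ν` is continuous and its unit ball is compact.
-/

open Set

theorem add_sq_sub_mul_sq_le {s t a c η : ℝ} (hs : |s| ≤ a * t) (hη : a ^ 2 < η) :
    (s + c) ^ 2 - η * t ^ 2 ≤ η * c ^ 2 / (η - a ^ 2) := by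
  have hD : 0 < η - a ^ 2 := sub_pos.mpr hη
  have hsc : (s + c) ^ 2 ≤ (a * t + |c|) ^ 2 := by
    refine sq_le_sq' ?_ ?_ <;>
      linarith [abs_le.mp hs, neg_abs_le c, le_abs_self c, abs_nonneg s]
  rw [le_div_iff₀ hD]
  nlinarith [sq_nonneg ((η - a ^ 2) * t - a * |c|), sq_abs c]

theorem le_add_sq_sub_mul_sq {t a c η : ℝ} (ht₀ : 0 ≤ t) (ht₁ : t ≤ 1) (hη : a ^ 2 < η) :
    η * c ^ 2 / (η - a ^ 2) ≤
      (a * (a * c / (η - a ^ 2)) + c) ^ 2 - η * (|a * c / (η - a ^ 2)| * t) ^ 2 := by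
  have hD : 0 < η - a ^ 2 := sub_pos.mpr hη
  have hη₀ : 0 ≤ η := (sq_nonneg a).trans hη.le
  have ht : t ^ 2 ≤ 1 := pow_le_one₀ ht₀ ht₁
  have hvalue : (a * (a * c / (η - a ^ 2)) + c) ^ 2 - η * (a * c / (η - a ^ 2)) ^ 2 =
      η * c ^ 2 / (η - a ^ 2) := by
    field_simp
    ring
  rw [mul_pow, sq_abs]
  nlinarith [mul_le_mul_of_nonneg_left ht (mul_nonneg hη₀ (sq_nonneg (a * c / (η - a ^ 2))))]

namespace Seminorm

variable {E : Type*} [NormedAddCommGroup E] [NormedSpace ℝ E] [FiniteDimensional ℝ E]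

theorem continuous_of_finiteDimensional (p : Seminorm ℝ E) : Continuous p :=
  continuousOn_univ.mp (p.convexOn.continuousOn isOpen_univ)

theorem exists_pos_mul_norm_le (p : Seminorm ℝ E) (hp : ∀ u, p u = 0 → u = 0) :
    ∃ m, 0 < m ∧ ∀ u, m * ‖u‖ ≤ p u := by
  have hsphere : ∀ u ∈ Metric.sphere (0 : E) 1, 0 < p u := fun u hu =>
    (apply_nonneg p u).lt_of_ne fun h =>
      ne_zero_of_mem_unit_sphere (⟨u, hu⟩ : Metric.sphere (0 : E) 1) (hp u h.symm)
  obtain ⟨m, hm, hmp⟩ := (isCompact_sphere (0 : E) 1).exists_forall_le'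
    p.continuous_of_finiteDimensional.continuousOn hsphere
  refine ⟨m, hm, fun u => ?_⟩
  rcases eq_or_ne u 0 with rfl | hu
  · simp
  have hnorm : 0 < ‖u‖ := norm_pos_iff.mpr hu
  have hunit : ‖u‖⁻¹ • u ∈ Metric.sphere (0 : E) 1 := by
    simp [norm_smul, hnorm.ne']
  calc m * ‖u‖ ≤ p (‖u‖⁻¹ • u) * ‖u‖ := mul_le_mul_of_nonneg_right (hmp _ hunit) hnorm.le
    _ = p u := by
      rw [map_smul_eq_mul, norm_inv, norm_norm]
      field_simp

theorem isCompact_closedBall_zero (p : Seminorm ℝ E) (hp : ∀ u, p u = 0 → u = 0) (r : ℝ) :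
    IsCompact (p.closedBall 0 r) := by
  obtain ⟨m, hm, hmp⟩ := p.exists_pos_mul_norm_le hp
  refine Metric.isCompact_of_isClosed_isBounded ?_
    ((Metric.isBounded_closedBall (x := (0 : E)) (r := r / m)).subset fun u hu => ?_)
  · rw [closedBall_zero_eq_preimage_closedBall]
    exact Metric.isClosed_closedBall.preimage p.continuous_of_finiteDimensional
  · rw [mem_closedBall_zero] at hu
    rw [mem_closedBall_zero_iff, le_div_iff₀ hm, mul_comm]
    exact (hmp u).trans hu

theorem exists_isGreatest_image_closedBall (p : Seminorm ℝ E) (hp : ∀ u, p u = 0 → u = 0)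
    (f : E →L[ℝ] ℝ) : ∃ u ∈ p.closedBall 0 1, IsGreatest (f '' p.closedBall 0 1) (f u) := by
  obtain ⟨u, hu, hmax⟩ := (p.isCompact_closedBall_zero hp 1).exists_isMaxOn
    ⟨0, p.mem_closedBall_self zero_le_one⟩ f.continuous.continuousOn
  exact ⟨u, hu, mem_image_of_mem f hu, forall_mem_image.mpr hmax⟩

theorem abs_le_sSup_image_closedBall_mul (p : Seminorm ℝ E) (hp : ∀ u, p u = 0 → u = 0)
    (f : E →L[ℝ] ℝ) (u : E) : |f u| ≤ sSup (f '' p.closedBall 0 1) * p u := by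
  obtain ⟨u₀, -, hgreatest⟩ := p.exists_isGreatest_image_closedBall hp f
  rw [hgreatest.csSup_eq]
  have hle : ∀ v, p v ≤ 1 → f v ≤ f u₀ := fun v hv =>
    hgreatest.2 (mem_image_of_mem f (p.mem_closedBall_zero.mpr hv))
  rcases (apply_nonneg p u).eq_or_lt with hpu | hpu
  · simp [hp u hpu.symm]
  have hunit : ∀ v, p v = p u → p ((p u)⁻¹ • v) ≤ 1 := fun v hv => by
    rw [map_smul_eq_mul, hv, norm_inv, Real.norm_of_nonneg hpu.le, inv_mul_cancel₀ hpu.ne']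
  have hpos := hle _ (hunit u rfl)
  have hneg := hle _ (hunit (-u) (map_neg_eq_map p u))
  rw [map_smul, smul_eq_mul, inv_mul_le_iff₀ hpu] at hpos hneg
  rw [map_neg] at hneg
  exact abs_le.mpr ⟨by linarith, by linarith⟩

end Seminorm

/-- Lemma 6.3(ii-b) (bounded case, `m = 2`): for a norm `ν` on a finite-dimensional real
inner product space, with `a = ν*(x)` the dual norm of `x` and `η > a²`,
`sup_q [(⟨x,q⟩ + c)² − η·ν(q)²] = η·c²/(η − a²)`, attained at
`q* = (a·c/(η − a²))·q̄` whenever `ν(q̄) ≤ 1` and `⟨x,q̄⟩ = a`. -/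
theorem perturbation_problem_bounded {E : Type*} [NormedAddCommGroup E]
    [InnerProductSpace ℝ E] [FiniteDimensional ℝ E]
    (ν : E → ℝ)
    (hν_add : ∀ u v, ν (u + v) ≤ ν u + ν v)
    (hν_smul : ∀ (a : ℝ) (u : E), ν (a • u) = |a| * ν u)
    (hν_eq : ∀ u, ν u = 0 ↔ u = 0)
    (x : E) (c η a : ℝ)
    (ha : a = sSup ((fun u => (inner ℝ x u : ℝ)) '' {u | ν u ≤ 1}))
    (hη : a ^ 2 < η) :
    sSup (Set.range fun q : E => ((inner ℝ x q : ℝ) + c) ^ 2 - η * ν q ^ 2) =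
      η * c ^ 2 / (η - a ^ 2) ∧
    ∀ qbar : E, ν qbar ≤ 1 → (inner ℝ x qbar : ℝ) = a →
      ((inner ℝ x ((a * c / (η - a ^ 2)) • qbar) : ℝ) + c) ^ 2 -
          η * ν ((a * c / (η - a ^ 2)) • qbar) ^ 2 =
        η * c ^ 2 / (η - a ^ 2) := by
  let p : Seminorm ℝ E := .of ν hν_add fun r u => by rw [hν_smul, Real.norm_eq_abs]
  have hp : ∀ u, p u = 0 → u = 0 := fun u => (hν_eq u).mp
  have ha' : a = sSup (innerSL ℝ x '' p.closedBall 0 1) := by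
    rw [ha, p.closedBall_zero_eq]
    rfl
  have hdual : ∀ q, |inner ℝ x q| ≤ a * ν q := fun q => by
    have := p.abs_le_sSup_image_closedBall_mul hp (innerSL ℝ x) q
    rwa [← ha', innerSL_apply_apply] at this
  have hupper : ∀ q, (inner ℝ x q + c) ^ 2 - η * ν q ^ 2 ≤ η * c ^ 2 / (η - a ^ 2) :=
    fun q => add_sq_sub_mul_sq_le (hdual q) hη
  have hattained : ∀ qbar : E, ν qbar ≤ 1 → inner ℝ x qbar = a →
      (inner ℝ x ((a * c / (η - a ^ 2)) • qbar) + c) ^ 2 -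
          η * ν ((a * c / (η - a ^ 2)) • qbar) ^ 2 = η * c ^ 2 / (η - a ^ 2) := by
    intro qbar hqbar hinner
    refine (hupper _).antisymm ?_
    rw [real_inner_smul_right, hinner, hν_smul, mul_comm _ a]
    exact le_add_sq_sub_mul_sq (apply_nonneg p qbar) hqbar hη
  obtain ⟨qbar, hqbar, hgreatest⟩ := p.exists_isGreatest_image_closedBall hp (innerSL ℝ x)
  have hqbar_inner : inner ℝ x qbar = a := by
    rw [ha', hgreatest.csSup_eq, innerSL_apply_apply]
  refine ⟨IsGreatest.csSup_eq ⟨?_, ?_⟩, hattained⟩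
  · exact ⟨_, hattained qbar (p.mem_closedBall_zero.mp hqbar) hqbar_inner⟩
  · exact forall_mem_range.mpr hupper
end

section
/- Let E be a finite-dimensional real inner product space, ν a norm on E, x ∈ E, c ∈ ℝ, and let a := sup{⟨x,u⟩ : u ∈ E, ν(u) ≤ 1} be the dual norm of x. If 0 ≤ η < a², then the set {(⟨x,q⟩ + c)² − η·ν(q)² : q ∈ E} is not bounded above. -/
/-!
Pick a direction `u` with `ν u ≤ 1` and `η < ⟨x,u⟩²`; it exists because `√η` lies below the
supremum `a` (when the set of values `⟨x,u⟩` is unbounded, `sSup` is `0` and `η < 0` is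
impossible). Along the line `t ↦ t • u` the objective is the quadratic
`(⟨x,u⟩² − η ν(u)²) t² + 2 c ⟨x,u⟩ t + c²`, whose leading coefficient is positive.
-/

open Set Filter

lemma Real.exists_mem_lt_sq_of_lt_sSup_sq {S : Set ℝ} {η : ℝ} (h0 : (0 : ℝ) ∈ S) (hη0 : 0 ≤ η)
    (hη : η < sSup S ^ 2) : ∃ s ∈ S, η < s ^ 2 := by
  by_cases hS : BddAbove S
  · have hpos : 0 < sSup S := by nlinarith [le_csSup hS h0]
    have hsqrt : √η < sSup S := (Real.sqrt_lt' hpos).2 hη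
    obtain ⟨s, hs, hlt⟩ := exists_lt_of_lt_csSup ⟨0, h0⟩ hsqrt
    exact ⟨s, hs, Real.lt_sq_of_sqrt_lt hlt⟩
  · rw [Real.sSup_of_not_bddAbove hS] at hη
    linarith

lemma not_bddAbove_range_quadratic {A : ℝ} (B C : ℝ) (hA : 0 < A) :
    ¬ BddAbove (range fun t : ℝ => A * t ^ 2 + B * t + C) := by
  refine not_bddAbove_of_tendsto_atTop (l := atTop) ?_
  have hlin : Tendsto (fun t : ℝ => A * t + B) atTop atTop :=
    tendsto_atTop_add_const_right _ _ (tendsto_id.const_mul_atTop hA)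
  refine tendsto_atTop_add_const_right _ _ ((tendsto_id.atTop_mul_atTop₀ hlin).congr fun t => ?_)
  simp only [id]
  ring

namespace Seminorm

variable {E : Type*} [AddCommGroup E] [Module ℝ E]

lemma exists_mul_sq_lt_sq_of_lt_sSup_sq (p : Seminorm ℝ E) (f : E →ₗ[ℝ] ℝ) {η : ℝ} (hη0 : 0 ≤ η)
    (hη : η < sSup (f '' {u | p u ≤ 1}) ^ 2) : ∃ u, η * p u ^ 2 < f u ^ 2 := by
  have h0 : (0 : ℝ) ∈ f '' {u | p u ≤ 1} := ⟨0, by simp, map_zero f⟩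
  obtain ⟨_, ⟨u, hu, rfl⟩, hlt⟩ := Real.exists_mem_lt_sq_of_lt_sSup_sq h0 hη0 hη
  have hpu : p u ^ 2 ≤ 1 := pow_le_one₀ (apply_nonneg p u) hu
  exact ⟨u, by nlinarith⟩

theorem not_bddAbove_range_sq_add_sub_mul_sq (p : Seminorm ℝ E) (f : E →ₗ[ℝ] ℝ) (c : ℝ) {η : ℝ}
    (hη0 : 0 ≤ η) (hη : η < sSup (f '' {u | p u ≤ 1}) ^ 2) :
    ¬ BddAbove (range fun q => (f q + c) ^ 2 - η * p q ^ 2) := by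
  obtain ⟨u, hu⟩ := p.exists_mul_sq_lt_sq_of_lt_sSup_sq f hη0 hη
  intro hbdd
  refine not_bddAbove_range_quadratic (2 * f u * c) (c ^ 2) (sub_pos.2 hu) (hbdd.mono ?_)
  rintro _ ⟨t, rfl⟩
  refine ⟨t • u, ?_⟩
  simp only [map_smul, map_smul_eq_mul, smul_eq_mul, Real.norm_eq_abs, mul_pow, sq_abs]
  ring

end Seminorm

theorem perturbation_problem_unbounded_general {E : Type*} [NormedAddCommGroup E]
    [InnerProductSpace ℝ E]
    (ν : E → ℝ)
    (hν_add : ∀ u v, ν (u + v) ≤ ν u + ν v)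
    (hν_smul : ∀ (a : ℝ) (u : E), ν (a • u) = |a| * ν u)
    (x : E) (c η a : ℝ)
    (ha : a = sSup ((fun u => (inner ℝ x u : ℝ)) '' {u | ν u ≤ 1}))
    (hη0 : 0 ≤ η) (hη : η < a ^ 2) :
    ¬ BddAbove (Set.range fun q : E => ((inner ℝ x q : ℝ) + c) ^ 2 - η * ν q ^ 2) := by
  subst ha
  exact (Seminorm.of ν hν_add (by simpa using hν_smul)).not_bddAbove_range_sq_add_sub_mul_sq
    (innerSL ℝ x).toLinearMap c hη0 hη

/-- Lemma 6.3(i) (unbounded case, `m = 2`): for a norm `ν` on a finite-dimensional real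
inner product space, with `a = ν*(x)` the dual norm of `x`, if `0 ≤ η < a²` then the
objective `q ↦ (⟨x,q⟩ + c)² − η·ν(q)²` is not bounded above. -/
theorem perturbation_problem_unbounded {E : Type*} [NormedAddCommGroup E]
    [InnerProductSpace ℝ E] [FiniteDimensional ℝ E]
    (ν : E → ℝ)
    (hν_add : ∀ u v, ν (u + v) ≤ ν u + ν v)
    (hν_smul : ∀ (a : ℝ) (u : E), ν (a • u) = |a| * ν u)
    (hν_eq : ∀ u, ν u = 0 ↔ u = 0)
    (x : E) (c η a : ℝ)
    (ha : a = sSup ((fun u => (inner ℝ x u : ℝ)) '' {u | ν u ≤ 1}))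
    (hη0 : 0 ≤ η) (hη : η < a ^ 2) :
    ¬ BddAbove (Set.range fun q : E => ((inner ℝ x q : ℝ) + c) ^ 2 - η * ν q ^ 2) :=
  perturbation_problem_unbounded_general ν hν_add hν_smul x c η a ha hη0 hη
end
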